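/- arXiv:2105.14438 — 5 statements merged into one kernel-verified Lean document; each statement's English description precedes it below -/
import Mathlib

section
/- (Kac's lemma) Let π be the stationary distribution of an irreducible positive-recurrent Markov chain on a countable state space V. Then for any nonempty S ⊆ V, the mean return time τ_S = (Σ_{i∈S} π_i τ⁺_{i→S}) / (Σ_{i∈S} π_i) satisfies τ_S = 1 / Σ_{i∈S} π_i; in particular τ_i = 1/π_i for every i ∈ V. -/
open scoped ENNReal Classical

/-- `hitBy P S n i = P(T_S ≤ n | Y_0 = i)` for a Markov chain with transition matrix `P`. -/
noncomputable def hitBy {V : Type*} (P : V → V → ℝ≥0∞) (S : Set V) : ℕ → V → ℝ≥0∞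
  | 0, i => if i ∈ S then 1 else 0
  | n + 1, i => if i ∈ S then 1 else ∑' j, P i j * hitBy P S n j

/-- The mean hitting time `τ_{i→S} = E[T_S | Y_0 = i]`. -/
noncomputable def meanHit {V : Type*} (P : V → V → ℝ≥0∞) (S : Set V) (i : V) : ℝ≥0∞ :=
  ∑' n, (1 - hitBy P S n i)

/-- The mean return time `τ⁺_{i→S} = E[T⁺_S | Y_0 = i] = 1 + ∑_j P_{ij} τ_{j→S}`. -/
noncomputable def returnTime {V : Type*} (P : V → V → ℝ≥0∞) (S : Set V) (i : V) : ℝ≥0∞ :=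
  1 + ∑' j, P i j * meanHit P S j

/-! Kac's lemma is a conservation law for the stationary flow. Let
`u n = ∑_j π_j P_j(T_S > n)` be the `π`-mass that avoids `S` at times `0, …, n`. By stationarity
`u n = ∑_i π_i ∑_j P_{ij} P_j(T_S > n)`; the terms with `i ∉ S` add up to `u (n + 1)`, so those
with `i ∈ S` form the increment `u n - u (n + 1)`. Summing over `n`, with `u n → 0` by dominated
convergence because hitting times are finite, gives `∑_{i∈S} π_i ∑_j P_{ij} τ_{j→S} = u 0 = π(Sᶜ)`,
that is `∑_{i∈S} π_i τ⁺_{i→S} = π(V) = 1`. -/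

open Filter Topology

theorem ENNReal.tendsto_tsum_of_dominated_convergence {ι : Type*} {F : ℕ → ι → ℝ≥0∞}
    {f : ι → ℝ≥0∞} (bound : ι → ℝ≥0∞) (h_bound : ∀ n i, F n i ≤ bound i)
    (h_fin : ∑' i, bound i ≠ ∞) (h_lim : ∀ i, Tendsto (F · i) atTop (𝓝 (f i))) :
    Tendsto (fun n => ∑' i, F n i) atTop (𝓝 (∑' i, f i)) := by
  let _ : MeasurableSpace ι := ⊤
  simp only [← MeasureTheory.lintegral_count' measurable_from_top] at h_fin ⊢
  exact MeasureTheory.tendsto_lintegral_of_dominated_convergence bound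
    (fun _ => measurable_from_top) (fun n => .of_forall (h_bound n)) h_fin (.of_forall h_lim)

theorem ENNReal.tsum_eq_of_eq_add_succ {c u : ℕ → ℝ≥0∞} (h : ∀ n, u n = c n + u (n + 1))
    (hu : Tendsto u atTop (𝓝 0)) : ∑' n, c n = u 0 := by
  have partial_sums : ∀ N, ∑ n ∈ Finset.range N, c n + u N = u 0 := by
    intro N
    induction N with
    | zero => simp
    | succ N ih => rw [Finset.sum_range_succ, add_assoc, ← h, ih]
  have hlim := (ENNReal.tendsto_nat_tsum c).add hu
  simp only [partial_sums, add_zero] at hlim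
  exact tendsto_nhds_unique hlim tendsto_const_nhds

theorem tsum_compl_eq_tsum_of_eq_zero {α β : Type*} [AddCommMonoid β] [TopologicalSpace β]
    {s : Set α} {f : α → β} (hf : ∀ a ∈ s, f a = 0) : ∑' a : ↥sᶜ, f a = ∑' a, f a :=
  tsum_subtype_eq_of_support_subset fun a ha has => ha (hf a has)

section MarkovChain

variable {V : Type*} {P : V → V → ℝ≥0∞} {S T : Set V} {i : V}

theorem tsum_mul_le_one_of_stochastic (hst : ∀ i, ∑' j, P i j = 1) {f : V → ℝ≥0∞}
    (hf : ∀ j, f j ≤ 1) (i : V) : ∑' j, P i j * f j ≤ 1 :=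
  calc ∑' j, P i j * f j ≤ ∑' j, P i j :=
        ENNReal.tsum_le_tsum fun j => mul_le_of_le_one_right' (hf j)
    _ = 1 := hst i

theorem tsum_mul_tsum_of_stationary {π : V → ℝ≥0∞} (hπstat : ∀ j, ∑' i, π i * P i j = π j)
    (g : V → ℝ≥0∞) : ∑' i, π i * ∑' j, P i j * g j = ∑' j, π j * g j := by
  simp_rw [← ENNReal.tsum_mul_left, ← mul_assoc]
  rw [ENNReal.tsum_comm]
  simp_rw [ENNReal.tsum_mul_right, hπstat]

theorem hitBy_of_mem (h : i ∈ S) (n : ℕ) : hitBy P S n i = 1 := by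
  cases n <;> simp [hitBy, h]

theorem hitBy_zero_of_notMem (h : i ∉ S) : hitBy P S 0 i = 0 := by
  simp [hitBy, h]

theorem hitBy_succ_of_notMem (h : i ∉ S) (n : ℕ) :
    hitBy P S (n + 1) i = ∑' j, P i j * hitBy P S n j := by
  simp [hitBy, h]

theorem hitBy_le_one (hst : ∀ i, ∑' j, P i j = 1) (n : ℕ) (i : V) : hitBy P S n i ≤ 1 := by
  by_cases h : i ∈ S
  · rw [hitBy_of_mem h]
  cases n with
  | zero => simp [hitBy_zero_of_notMem h]
  | succ n =>
    rw [hitBy_succ_of_notMem h]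
    exact tsum_mul_le_one_of_stochastic hst (hitBy_le_one hst n) i

theorem hitBy_mono (hst : ∀ i, ∑' j, P i j = 1) (hST : S ⊆ T) (n : ℕ) (i : V) :
    hitBy P S n i ≤ hitBy P T n i := by
  by_cases hT : i ∈ T
  · rw [hitBy_of_mem hT]
    exact hitBy_le_one hst n i
  have hS : i ∉ S := fun h => hT (hST h)
  cases n with
  | zero => simp [hitBy_zero_of_notMem hS]
  | succ n =>
    rw [hitBy_succ_of_notMem hS, hitBy_succ_of_notMem hT]
    exact ENNReal.tsum_le_tsum fun j => mul_le_mul_right (hitBy_mono hst hST n j) _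

theorem one_sub_hitBy_succ (hst : ∀ i, ∑' j, P i j = 1) (h : i ∉ S) (n : ℕ) :
    1 - hitBy P S (n + 1) i = ∑' j, P i j * (1 - hitBy P S n j) := by
  rw [hitBy_succ_of_notMem h]
  refine (ENNReal.eq_sub_of_add_eq ?_ ?_).symm
  · exact ne_top_of_le_ne_top ENNReal.one_ne_top
      (tsum_mul_le_one_of_stochastic hst (hitBy_le_one hst n) i)
  · rw [← ENNReal.tsum_add]
    simp_rw [← mul_add, tsub_add_cancel_of_le (hitBy_le_one hst n _), mul_one]
    exact hst i

theorem meanHit_of_mem (h : i ∈ S) : meanHit P S i = 0 := by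
  simp [meanHit, hitBy_of_mem h]

theorem meanHit_eq_one_add (hst : ∀ i, ∑' j, P i j = 1) (h : i ∉ S) :
    meanHit P S i = 1 + ∑' j, P i j * meanHit P S j := by
  rw [meanHit, tsum_eq_zero_add' ENNReal.summable, hitBy_zero_of_notMem h, tsub_zero]
  simp_rw [one_sub_hitBy_succ hst h, meanHit, ← ENNReal.tsum_mul_left]
  rw [ENNReal.tsum_comm]

theorem returnTime_eq_meanHit (hst : ∀ i, ∑' j, P i j = 1) (h : i ∉ S) :
    returnTime P S i = meanHit P S i :=
  (meanHit_eq_one_add hst h).symm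

theorem meanHit_anti (hst : ∀ i, ∑' j, P i j = 1) (hST : S ⊆ T) (i : V) :
    meanHit P T i ≤ meanHit P S i :=
  ENNReal.tsum_le_tsum fun n => tsub_le_tsub_left (hitBy_mono hst hST n i) 1

theorem meanHit_ne_top_of_returnTime_ne_top {a b : V} (hab : 0 < P a b)
    (ha : returnTime P S a ≠ ∞) : meanHit P S b ≠ ∞ := by
  have hb : P a b * meanHit P S b ≠ ∞ :=
    ne_top_of_le_ne_top ha ((ENNReal.le_tsum b).trans le_add_self)
  exact fun h => hb (ENNReal.mul_eq_top.mpr (Or.inl ⟨hab.ne', h⟩))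

theorem meanHit_singleton_ne_top (hst : ∀ i, ∑' j, P i j = 1) {j : V}
    (hreach : Relation.ReflTransGen (fun a b => 0 < P a b) i j)
    (hrec : returnTime P {i} i ≠ ∞) : meanHit P {i} j ≠ ∞ := by
  induction hreach with
  | refl => simp [meanHit_of_mem (Set.mem_singleton i)]
  | @tail a b _ hab ih =>
    refine meanHit_ne_top_of_returnTime_ne_top hab ?_
    by_cases ha : a = i
    · rwa [ha]
    · rwa [returnTime_eq_meanHit hst (Set.notMem_singleton_iff.mpr ha)]

theorem meanHit_ne_top (hst : ∀ i, ∑' j, P i j = 1) {j : V}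
    (hreach : Relation.ReflTransGen (fun a b => 0 < P a b) i j) (hi : i ∈ S)
    (hrec : returnTime P {i} i ≠ ∞) : meanHit P S j ≠ ∞ :=
  ne_top_of_le_ne_top (meanHit_singleton_ne_top hst hreach hrec)
    (meanHit_anti hst (Set.singleton_subset_iff.mpr hi) j)

theorem tsum_mul_one_sub_hitBy_eq_add (hst : ∀ i, ∑' j, P i j = 1) {π : V → ℝ≥0∞}
    (hπstat : ∀ j, ∑' i, π i * P i j = π j) (n : ℕ) :
    ∑' j, π j * (1 - hitBy P S n j) =
      ∑' i : S, π i * ∑' j, P i j * (1 - hitBy P S n j) +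
        ∑' j, π j * (1 - hitBy P S (n + 1) j) := by
  rw [← tsum_mul_tsum_of_stationary hπstat,
    ← Summable.tsum_add_tsum_compl ENNReal.summable ENNReal.summable]
  congr 1
  calc ∑' j : ↥Sᶜ, π j * ∑' k, P j k * (1 - hitBy P S n k)
      = ∑' j : ↥Sᶜ, π j * (1 - hitBy P S (n + 1) j) :=
        tsum_congr fun j => by rw [one_sub_hitBy_succ hst j.2]
    _ = ∑' j, π j * (1 - hitBy P S (n + 1) j) :=
        tsum_compl_eq_tsum_of_eq_zero (f := fun j => π j * (1 - hitBy P S (n + 1) j))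
          fun j hj => by rw [hitBy_of_mem hj, tsub_self, mul_zero]

theorem tsum_mul_returnTime (hst : ∀ i, ∑' j, P i j = 1) {π : V → ℝ≥0∞}
    (hπstat : ∀ j, ∑' i, π i * P i j = π j) (hπfin : ∑' i, π i ≠ ∞)
    (hfin : ∀ j, meanHit P S j ≠ ∞) :
    ∑' i : S, π i * returnTime P S i = ∑' i, π i := by
  set u : ℕ → ℝ≥0∞ := fun n => ∑' j, π j * (1 - hitBy P S n j)
  have hu : Tendsto u atTop (𝓝 0) := by
    simpa using ENNReal.tendsto_tsum_of_dominated_convergence π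
      (fun n j => mul_le_of_le_one_right' tsub_le_self) hπfin fun j =>
        ENNReal.Tendsto.const_mul (ENNReal.tendsto_atTop_zero_of_tsum_ne_top (hfin j))
          (Or.inr (ENNReal.ne_top_of_tsum_ne_top hπfin j))
  have hflow : ∑' n, ∑' i : S, π i * ∑' j, P i j * (1 - hitBy P S n j) = u 0 :=
    ENNReal.tsum_eq_of_eq_add_succ (tsum_mul_one_sub_hitBy_eq_add hst hπstat) hu
  have hu0 : u 0 = ∑' i : ↥Sᶜ, π i := by
    refine (tsum_compl_eq_tsum_of_eq_zero fun j hj => ?_).symm.trans (tsum_congr fun j => ?_)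
    · rw [hitBy_of_mem hj, tsub_self, mul_zero]
    · rw [hitBy_zero_of_notMem j.2, tsub_zero, mul_one]
  calc ∑' i : S, π i * returnTime P S i
      = ∑' i : S, π i + ∑' i : S, π i * ∑' j, P i j * meanHit P S j := by
        simp_rw [returnTime, mul_add, mul_one, ENNReal.tsum_add]
    _ = ∑' i : S, π i + ∑' n, ∑' i : S, π i * ∑' j, P i j * (1 - hitBy P S n j) := by
        simp_rw [meanHit, ← ENNReal.tsum_mul_left]
        conv_rhs => rw [ENNReal.tsum_comm]
        exact congrArg _ (tsum_congr fun i => ENNReal.tsum_comm)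
    _ = ∑' i, π i := by
        rw [hflow, hu0, Summable.tsum_add_tsum_compl ENNReal.summable ENNReal.summable]

end MarkovChain

theorem kac_lemma_general {V : Type*}
    (P : V → V → ℝ≥0∞) (hst : ∀ i, ∑' j, P i j = 1)
    (hirr : ∀ i j : V, Relation.ReflTransGen (fun a b => 0 < P a b) i j)
    (π : V → ℝ≥0∞) (hπsum : ∑' i, π i = 1)
    (hπstat : ∀ j, ∑' i, π i * P i j = π j)
    (hposrec : ∀ i, returnTime P {i} i < ⊤) :
    (∀ S : Set V, S.Nonempty →
      (∑' i : S, π i * returnTime P S i) / (∑' i : S, π i) = 1 / ∑' i : S, π i) ∧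
    (∀ i : V, returnTime P {i} i = 1 / π i) := by
  have key : ∀ S : Set V, S.Nonempty → ∑' i : S, π i * returnTime P S i = 1 := by
    rintro S ⟨i, hi⟩
    rw [← hπsum]
    exact tsum_mul_returnTime hst hπstat (by simp [hπsum])
      fun j => meanHit_ne_top hst (hirr i j) hi (hposrec i).ne
  refine ⟨fun S hS => by rw [key S hS], fun i => ?_⟩
  have hi := key {i} (Set.singleton_nonempty i)
  rw [tsum_singleton i (fun j => π j * returnTime P {i} j), mul_comm] at hi
  rw [one_div]
  exact ENNReal.eq_inv_of_mul_eq_one_left hi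

/-- **Kac's lemma.** For an irreducible positive-recurrent Markov chain with stationary
distribution `π`, the mean return time to a nonempty set `S`, namely
`τ_S = (∑_{i∈S} π_i τ⁺_{i→S}) / (∑_{i∈S} π_i)`, equals `1 / ∑_{i∈S} π_i`;
in particular `τ_i = 1/π_i`. -/
theorem kac_lemma {V : Type*} [Countable V]
    (P : V → V → ℝ≥0∞) (hst : ∀ i, ∑' j, P i j = 1)
    (hirr : ∀ i j : V, Relation.ReflTransGen (fun a b => 0 < P a b) i j)
    (π : V → ℝ≥0∞) (hπpos : ∀ i, 0 < π i) (hπsum : ∑' i, π i = 1)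
    (hπstat : ∀ j, ∑' i, π i * P i j = π j)
    (hposrec : ∀ i, returnTime P {i} i < ⊤) :
    (∀ S : Set V, S.Nonempty →
      (∑' i : S, π i * returnTime P S i) / (∑' i : S, π i) = 1 / ∑' i : S, π i) ∧
    (∀ i : V, returnTime P {i} i = 1 / π i) :=
  kac_lemma_general P hst hirr π hπsum hπstat hposrec
end

section
/- Let P̂ be an irreducible stochastic matrix on the directed edge set E of a graph G = (V,E), supported on the line graph (P̂_{ef} > 0 only if ter(e) = sou(f)), with stationary distribution π̂ > 0. Define λ_e = π̂_e / Σ_{f: ter(f)=ter(e)} π̂_f, the lifting matrix L ∈ ℝ^{V×E} with L_{ie} = λ_e if ter(e) = i and 0 else, and the restriction matrix R ∈ ℝ^{E×V} with R_{ei} = 1 if ter(e) = i and 0 else. Then the pullback matrix P = L P̂ R is an irreducible stochastic matrix on V. -/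
open scoped Classical

/-- The pullback `P = L P̂ R` of an irreducible edge-chain transition matrix `P̂` onto the
nodes is an irreducible stochastic matrix. -/
theorem pullback_irreducible_stochastic {V E : Type*} [Fintype V] [Fintype E]
    [DecidableEq V] [DecidableEq E]
    (sou ter : E → V)
    -- E is the set of directed edges of a graph on V
    (hinj : Function.Injective fun e => (sou e, ter e))
    -- every node has an incoming edge
    (hin : ∀ i : V, ∃ e : E, ter e = i)
    (Phat : Matrix E E ℝ) (hnn : ∀ e f, 0 ≤ Phat e f)
    (hsupp : ∀ e f, Phat e f ≠ 0 → ter e = sou f)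
    (hst : ∀ e, ∑ f, Phat e f = 1)
    (hirr : ∀ e f : E, Relation.ReflTransGen (fun a b => 0 < Phat a b) e f)
    (πhat : E → ℝ) (hπpos : ∀ e, 0 < πhat e) (hπsum : ∑ e, πhat e = 1)
    (hπstat : ∀ f, ∑ e, πhat e * Phat e f = πhat f)
    (lam : E → ℝ)
    (hlam : ∀ e, lam e = πhat e / ∑ f ∈ Finset.univ.filter (fun f => ter f = ter e), πhat f)
    (L : Matrix V E ℝ) (hL : ∀ i e, L i e = if ter e = i then lam e else 0)
    (R : Matrix E V ℝ) (hR : ∀ e i, R e i = if ter e = i then 1 else 0) :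
    (∀ i j, 0 ≤ (L * Phat * R) i j) ∧
    (∀ i, ∑ j, (L * Phat * R) i j = 1) ∧
    (∀ i j : V, Relation.ReflTransGen (fun a b => 0 < (L * Phat * R) a b) i j) := by
  have hden : ∀ e : E, 0 < ∑ f ∈ Finset.univ.filter (fun f => ter f = ter e), πhat f := by
    intro e
    exact Finset.sum_pos (fun f _ => hπpos f) ⟨e, by simp⟩
  have hlampos : ∀ e, 0 < lam e := fun e => by
    rw [hlam e]; exact div_pos (hπpos e) (hden e)
  have hentry : ∀ i j, (L * Phat * R) i j =
      ∑ e, ∑ f, (if ter e = i then lam e else 0) * Phat e f * (if ter f = j then 1 else 0) := by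
    intro i j
    simp only [Matrix.mul_apply, Finset.sum_mul]
    rw [Finset.sum_comm]
    exact Finset.sum_congr rfl fun e _ => Finset.sum_congr rfl fun f _ => by rw [hL, hR]
  have hnn' : ∀ i j, 0 ≤ (L * Phat * R) i j := by
    intro i j
    rw [hentry]
    refine Finset.sum_nonneg fun e _ => Finset.sum_nonneg fun f _ => ?_
    refine mul_nonneg (mul_nonneg ?_ (hnn e f)) ?_
    · split <;> [exact (hlampos e).le; rfl]
    · split <;> [exact zero_le_one; rfl]
  refine ⟨hnn', ?_, ?_⟩
  · intro i
    have h1 : ∑ j, (L * Phat * R) i j =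
        ∑ e, ∑ f, (if ter e = i then lam e else 0) * Phat e f *
          ∑ j, (if ter f = j then 1 else 0 : ℝ) := by
      simp only [hentry, Finset.mul_sum]
      rw [Finset.sum_comm]
      refine Finset.sum_congr rfl fun e _ => ?_
      rw [Finset.sum_comm]
    rw [h1]
    have h2 : ∀ f : E, ∑ j, (if ter f = j then 1 else 0 : ℝ) = 1 := by
      intro f; simp
    simp only [h2, mul_one]
    have h3 : ∀ e : E, ∑ f, (if ter e = i then lam e else 0) * Phat e f
        = (if ter e = i then lam e else 0) := by
      intro e; rw [← Finset.mul_sum, hst, mul_one]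
    simp only [h3]
    rw [← Finset.sum_filter]
    obtain ⟨e0, he0⟩ := hin i
    have hfe : ∀ e ∈ Finset.univ.filter (fun e => ter e = i),
        lam e = πhat e / ∑ f ∈ Finset.univ.filter (fun f => ter f = i), πhat f := by
      intro e he
      simp only [Finset.mem_filter] at he
      rw [hlam e, he.2]
    rw [Finset.sum_congr rfl hfe, ← Finset.sum_div, div_self]
    have := hden e0
    rw [he0] at this
    exact this.ne'
  · have hstep : ∀ e f, 0 < Phat e f → 0 < (L * Phat * R) (ter e) (ter f) := by
      intro e f hef
      rw [hentry]
      refine Finset.sum_pos' (fun a _ => Finset.sum_nonneg fun b _ => ?_) ⟨e, Finset.mem_univ e, ?_⟩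
      · refine mul_nonneg (mul_nonneg ?_ (hnn a b)) ?_
        · split <;> [exact (hlampos a).le; rfl]
        · split <;> [exact zero_le_one; rfl]
      · refine Finset.sum_pos' (fun b _ => ?_) ⟨f, Finset.mem_univ f, ?_⟩
        · refine mul_nonneg (mul_nonneg ?_ (hnn e b)) ?_
          · split <;> [exact (hlampos e).le; rfl]
          · split <;> [exact zero_le_one; rfl]
        · simpa using mul_pos (hlampos e) hef
    have hlift : ∀ e f : E, Relation.ReflTransGen (fun a b => 0 < Phat a b) e f →
        Relation.ReflTransGen (fun a b => 0 < (L * Phat * R) a b) (ter e) (ter f) := by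
      intro e f h
      induction h with
      | refl => exact Relation.ReflTransGen.refl
      | tail _ hbc ih => exact ih.tail (hstep _ _ hbc)
    intro i j
    obtain ⟨e, he⟩ := hin i
    obtain ⟨f, hf⟩ := hin j
    rw [← he, ← hf]
    exact hlift e f (hirr e f)
end

section
/- In the setting of the pullback construction, the vector π defined by π_i = Σ_{e: ter(e)=i} π̂_e is the stationary distribution of the pullback matrix P = L P̂ R: it is positive, sums to 1, and satisfies π^T P = π^T. -/
open scoped Classical

/-- The vector `π_i = ∑_{e : ter(e) = i} π̂_e` is the stationary distribution of the
pullback matrix `P = L P̂ R`. -/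
theorem pullback_stationary {V E : Type*} [Fintype V] [Fintype E]
    [DecidableEq V] [DecidableEq E]
    (sou ter : E → V)
    (hinj : Function.Injective fun e => (sou e, ter e))
    (hin : ∀ i : V, ∃ e : E, ter e = i)
    (Phat : Matrix E E ℝ) (hnn : ∀ e f, 0 ≤ Phat e f)
    (hsupp : ∀ e f, Phat e f ≠ 0 → ter e = sou f)
    (hst : ∀ e, ∑ f, Phat e f = 1)
    (hirr : ∀ e f : E, Relation.ReflTransGen (fun a b => 0 < Phat a b) e f)
    (πhat : E → ℝ) (hπpos : ∀ e, 0 < πhat e) (hπsum : ∑ e, πhat e = 1)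
    (hπstat : ∀ f, ∑ e, πhat e * Phat e f = πhat f)
    (lam : E → ℝ)
    (hlam : ∀ e, lam e = πhat e / ∑ f ∈ Finset.univ.filter (fun f => ter f = ter e), πhat f)
    (L : Matrix V E ℝ) (hL : ∀ i e, L i e = if ter e = i then lam e else 0)
    (R : Matrix E V ℝ) (hR : ∀ e i, R e i = if ter e = i then 1 else 0)
    (π : V → ℝ) (hπ : ∀ i, π i = ∑ e ∈ Finset.univ.filter (fun e => ter e = i), πhat e) :
    (∀ i, 0 < π i) ∧ (∑ i, π i = 1) ∧
    (∀ j, ∑ i, π i * (L * Phat * R) i j = π j) := by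

  have hS : ∀ i, 0 < ∑ e ∈ Finset.univ.filter (fun e => ter e = i), πhat e := by
    intro i
    obtain ⟨e, he⟩ := hin i
    exact Finset.sum_pos (fun f _ => hπpos f)
      ⟨e, Finset.mem_filter.mpr ⟨Finset.mem_univ e, he⟩⟩
  have hpos : ∀ i, 0 < π i := fun i => (hπ i) ▸ hS i
  have hsum : ∑ i, π i = 1 := by
    calc ∑ i, π i = ∑ i, ∑ e ∈ Finset.univ.filter (fun e => ter e = i), πhat e := by
          simp only [hπ]
      _ = ∑ e, πhat e := Finset.sum_fiberwise _ _ _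
      _ = 1 := hπsum
  refine ⟨hpos, hsum, ?_⟩
  intro j
  have key : ∀ e, π (ter e) * lam e = πhat e := by
    intro e
    rw [hπ, hlam]
    rw [mul_div_assoc', mul_comm, mul_div_assoc, div_self (hS (ter e)).ne', mul_one]
  calc ∑ i, π i * (L * Phat * R) i j
      = ∑ i, ∑ f, ∑ e, π i * L i e * (Phat e f * R f j) := by
        simp only [Matrix.mul_apply, Finset.sum_mul, Finset.mul_sum]
        refine Finset.sum_congr rfl fun i _ => Finset.sum_congr rfl fun f _ =>
          Finset.sum_congr rfl fun e _ => by ring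
    _ = ∑ f, ∑ e, ∑ i, π i * L i e * (Phat e f * R f j) := by
        rw [Finset.sum_comm]
        exact Finset.sum_congr rfl fun f _ => Finset.sum_comm
    _ = ∑ e, (∑ f, ∑ i, π i * L i e * (Phat e f * R f j)) := Finset.sum_comm
    _ = ∑ e, ∑ f, πhat e * (Phat e f * R f j) := by
        refine Finset.sum_congr rfl fun e _ => Finset.sum_congr rfl fun f _ => ?_
        have : ∑ i, π i * L i e * (Phat e f * R f j)
            = (∑ i, π i * L i e) * (Phat e f * R f j) := by
          rw [Finset.sum_mul]
        rw [this]
        congr 1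
        rw [← key e]
        simp [hL, mul_ite]
    _ = ∑ f, (∑ e, πhat e * Phat e f) * R f j := by
        rw [Finset.sum_comm]
        refine Finset.sum_congr rfl fun f _ => ?_
        rw [Finset.sum_mul]
        exact Finset.sum_congr rfl fun e _ => by ring
    _ = ∑ f, πhat f * R f j := by
        simp only [hπstat]
    _ = π j := by
        rw [hπ]
        simp [hR, Finset.sum_ite_eq, mul_comm, Finset.sum_filter]
end

section
/- Let G be a finite undirected connected graph with adjacency matrix A, degrees d_i, and no dangling edges. Let P̂ be the non-backtracking transition matrix on directed edges. Then the pullback L P̂ R (with λ_e = 1/d_{ter(e)}, since the stationary distribution of P̂ is uniform) equals the transition matrix of the standard uniform random walk on G: (L P̂ R)_{ij} = A_{ij}/d_i. -/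
/-!
Row `i` of `L P̂ R` averages, over the `d_i` edges `e = (k, i)` entering `i`, the probability
that `P̂` moves from `e` to `(i, j)`. That probability is `1 / (d_i - 1)` for each of the
`d_i - 1` edges with `k ≠ j` and `0` otherwise, so the row sums to `A_ij / d_i`.
-/

section

open Finset

variable {V : Type*} [Fintype V] [DecidableEq V] (G : SimpleGraph V) [DecidableRel G.Adj]

theorem SimpleGraph.sum_adjSubtype_ite_val_eq {M : Type*} [AddCommMonoid M] (p : V × V) (c : M) :
    ∑ f : {e : V × V // G.Adj e.1 e.2}, (if f.val = p then c else 0) =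
      if G.Adj p.1 p.2 then c else 0 := by
  rw [← sum_subtype {x : V × V | G.Adj x.1 x.2} (by simp) fun x => if x = p then c else 0,
    sum_ite_eq']
  simp

theorem SimpleGraph.card_adjSubtype_snd_eq_fst_ne {i j : V} (hij : G.Adj i j) :
    #{e : {e : V × V // G.Adj e.1 e.2} | e.val.2 = i ∧ e.val.1 ≠ j} = G.degree i - 1 := by
  rw [← G.card_neighborFinset_eq_degree,
    ← card_erase_of_mem ((G.mem_neighborFinset _ _).2 hij)]
  refine card_bij (fun e _ => e.val.1) ?_ ?_ ?_
  · rintro ⟨⟨k, _⟩, hk⟩ he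
    simp only [mem_filter, mem_univ, true_and] at he
    obtain ⟨rfl, hkj⟩ := he
    simpa [hkj] using hk.symm
  · rintro ⟨⟨a, b⟩, _⟩ hab ⟨⟨c, d⟩, _⟩ hcd (rfl : a = c)
    simp only [mem_filter, mem_univ, true_and] at hab hcd
    simp [hab.1, hcd.1]
  · intro k hk
    rw [mem_erase, SimpleGraph.mem_neighborFinset] at hk
    exact ⟨⟨(k, i), hk.2.symm⟩, by simp [hk.1], rfl⟩

theorem pullback_mul_apply {β : Type*} (lam : {e : V × V // G.Adj e.1 e.2} → ℝ)
    (hlam : ∀ e, lam e = (G.degree e.val.2 : ℝ)⁻¹)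
    (L : Matrix V {e : V × V // G.Adj e.1 e.2} ℝ)
    (hL : ∀ i e, L i e = if e.val.2 = i then lam e else 0)
    (M : Matrix {e : V × V // G.Adj e.1 e.2} β ℝ) (i : V) (j : β) :
    (L * M) i j = (G.degree i : ℝ)⁻¹ * ∑ e with e.val.2 = i, M e j := by
  rw [Matrix.mul_apply, mul_sum, sum_filter]
  refine sum_congr rfl fun e _ => ?_
  rw [hL, hlam]
  split_ifs with h
  · rw [h]
  · simp

theorem nonbacktracking_mul_ter_apply
    (Phat : Matrix {e : V × V // G.Adj e.1 e.2} {e : V × V // G.Adj e.1 e.2} ℝ)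
    (hPhat : ∀ e f, Phat e f =
      if e.val.2 = f.val.1 ∧ f.val.2 ≠ e.val.1 then
        ((G.degree e.val.2 : ℝ) - (if G.Adj e.val.2 e.val.1 then 1 else 0))⁻¹
      else 0)
    (R : Matrix {e : V × V // G.Adj e.1 e.2} V ℝ)
    (hR : ∀ e i, R e i = if e.val.2 = i then 1 else 0)
    (e : {e : V × V // G.Adj e.1 e.2}) (j : V) :
    (Phat * R) e j =
      if G.Adj e.val.2 j ∧ j ≠ e.val.1 then ((G.degree e.val.2 : ℝ) - 1)⁻¹ else 0 := by
  have hterm : ∀ f, Phat e f * R f j = if f.val = (e.val.2, j) then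
      (if j ≠ e.val.1 then ((G.degree e.val.2 : ℝ) - 1)⁻¹ else 0) else 0 := by
    rintro ⟨⟨a, b⟩, _⟩
    rw [hPhat, hR, if_pos e.prop.symm]
    rcases eq_or_ne e.val.2 a with rfl | ha <;> rcases eq_or_ne b j with rfl | hb <;>
      simp [*, Ne.symm]
  rw [Matrix.mul_apply, sum_congr rfl fun f _ => hterm f, G.sum_adjSubtype_ite_val_eq, ite_and]

end

theorem pullback_nonbacktracking_eq_uniformRW_general {V : Type*} [Fintype V] [DecidableEq V]
    (G : SimpleGraph V) [DecidableRel G.Adj]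
    (hdeg : ∀ v, 2 ≤ G.degree v)
    (Phat : Matrix {e : V × V // G.Adj e.1 e.2} {e : V × V // G.Adj e.1 e.2} ℝ)
    (hPhat : ∀ e f, Phat e f =
      if e.val.2 = f.val.1 ∧ f.val.2 ≠ e.val.1 then
        ((G.degree e.val.2 : ℝ) - (if G.Adj e.val.2 e.val.1 then 1 else 0))⁻¹
      else 0)
    -- the stationary distribution of `P̂` is uniform, so `λ_e = 1/d_{ter(e)}`
    (lam : {e : V × V // G.Adj e.1 e.2} → ℝ)
    (hlam : ∀ e, lam e = (G.degree e.val.2 : ℝ)⁻¹)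
    (L : Matrix V {e : V × V // G.Adj e.1 e.2} ℝ)
    (hL : ∀ i e, L i e = if e.val.2 = i then lam e else 0)
    (R : Matrix {e : V × V // G.Adj e.1 e.2} V ℝ)
    (hR : ∀ e i, R e i = if e.val.2 = i then 1 else 0) :
    ∀ i j, (L * Phat * R) i j = (if G.Adj i j then (1 : ℝ) else 0) / G.degree i := by
  intro i j
  rw [Matrix.mul_assoc, pullback_mul_apply G lam hlam L hL,
    Finset.sum_congr rfl fun e he => by
      rw [nonbacktracking_mul_ter_apply G Phat hPhat R hR, (Finset.mem_filter.1 he).2]]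
  by_cases hij : G.Adj i j
  · have hd : (G.degree i : ℝ) - 1 ≠ 0 := by
      have : (2 : ℝ) ≤ G.degree i := by exact_mod_cast hdeg i
      linarith
    rw [Finset.sum_ite, Finset.sum_const_zero, add_zero, Finset.sum_const, Finset.filter_filter]
    simp only [hij, true_and, if_true, ne_comm (a := j)]
    rw [G.card_adjSubtype_snd_eq_fst_ne hij, nsmul_eq_mul, Nat.cast_pred (by have := hdeg i; omega)]
    field_simp
  · simp [hij]

/-- The pullback of the non-backtracking random walk on a finite undirected connected
graph (without dangling edges) is the standard uniform random walk:
`(L P̂ R)_{ij} = A_{ij}/d_i`. -/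
theorem pullback_nonbacktracking_eq_uniformRW {V : Type*} [Fintype V] [DecidableEq V]
    (G : SimpleGraph V) [DecidableRel G.Adj] (hconn : G.Connected)
    (hdeg : ∀ v, 2 ≤ G.degree v)
    (hnd : ∀ i j : V, G.Adj i j → ∃ k, G.Adj j k ∧ k ≠ i)
    (Phat : Matrix {e : V × V // G.Adj e.1 e.2} {e : V × V // G.Adj e.1 e.2} ℝ)
    (hPhat : ∀ e f, Phat e f =
      if e.val.2 = f.val.1 ∧ f.val.2 ≠ e.val.1 then
        ((G.degree e.val.2 : ℝ) - (if G.Adj e.val.2 e.val.1 then 1 else 0))⁻¹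
      else 0)
    -- the stationary distribution of `P̂` is uniform, so `λ_e = 1/d_{ter(e)}`
    (lam : {e : V × V // G.Adj e.1 e.2} → ℝ)
    (hlam : ∀ e, lam e = (G.degree e.val.2 : ℝ)⁻¹)
    (L : Matrix V {e : V × V // G.Adj e.1 e.2} ℝ)
    (hL : ∀ i e, L i e = if e.val.2 = i then lam e else 0)
    (R : Matrix {e : V × V // G.Adj e.1 e.2} V ℝ)
    (hR : ∀ e i, R e i = if e.val.2 = i then 1 else 0) :
    ∀ i j, (L * Phat * R) i j = (if G.Adj i j then (1 : ℝ) else 0) / G.degree i :=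
  pullback_nonbacktracking_eq_uniformRW_general G hdeg Phat hPhat lam hlam L hL R hR
end

section
/- Let G be a finite undirected connected graph without dangling edges and let P̂^{(α)} = α P̂^{(1)} + (1−α) P̂^{(0)} be the backtrack-downweighted edge transition matrix (P̂^{(1)} the uniform line-graph walk, P̂^{(0)} the non-backtracking walk), for α ∈ [0,1]. Then for any α for which the edge chain is ergodic, the second-order mean return time of the associated second-order walk at equilibrium satisfies τ̃_i = (Σ_{j∈V} d_j)/d_i for every node i, independently of α. -/
/-!
`P̂^(α)` is a convex combination of the uniform line-graph walk and the non-backtracking walk,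
both doubly stochastic when every degree is at least 2; so it is doubly stochastic and the
uniform distribution `π̂` on directed edges is stationary. Kac's formula
`∑_{e ∈ S} π̂_e τ⁺_{e→S} = 1`, for the set `S` of edges entering `i`, then gives
`τ̃_i = 1 / π̂(S) = (∑_j d_j) / d_i`.

Kac's formula telescopes: with `a_n = P_π(Y_0, …, Y_n ∉ S)`, stationarity gives
`P_π(Y_0 ∈ S, Y_1, …, Y_{n+1} ∉ S) = a_n - a_{n+1}`, and these sum to `a_0 = π(Sᶜ)` because
irreducibility makes `a_n` decay geometrically.
-/

open scoped ENNReal Classical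

open Filter Topology Finset

namespace ENNReal

theorem sum_lt_sum_of_le_of_lt {ι : Type*} {s : Finset ι} {f g : ι → ℝ≥0∞}
    (hg : ∑ i ∈ s, g i ≠ ⊤) (hle : ∀ i ∈ s, f i ≤ g i) {i : ι} (hi : i ∈ s) (hlt : f i < g i) :
    ∑ i ∈ s, f i < ∑ i ∈ s, g i := by
  have hrest : ∑ j ∈ s.erase i, f j ≤ ∑ j ∈ s.erase i, g j :=
    sum_le_sum fun j hj => hle j (mem_of_mem_erase hj)
  rw [← add_sum_erase s f hi, ← add_sum_erase s g hi]
  exact ENNReal.add_lt_add_of_lt_of_le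
    (ne_top_of_le_ne_top hg (hrest.trans (sum_le_sum_of_subset (erase_subset i s)))) hlt hrest

theorem natCast_sub_one_mul_inv {n : ℕ} (hn : 2 ≤ n) :
    ((n - 1 : ℕ) : ℝ≥0∞) * ((n : ℝ≥0∞) - 1)⁻¹ = 1 := by
  rw [natCast_sub, Nat.cast_one]
  refine ENNReal.mul_inv_cancel (tsub_pos_of_lt ?_).ne' (sub_ne_top (natCast_ne_top n))
  exact_mod_cast hn

theorem tsum_eq_of_add_succ_eq {t a : ℕ → ℝ≥0∞} (h : ∀ n, t n + a (n + 1) = a n)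
    (ha : Tendsto a atTop (𝓝 0)) : ∑' n, t n = a 0 := by
  have partial_sum : ∀ N, ∑ n ∈ range N, t n + a N = a 0 := by
    intro N
    induction N with
    | zero => simp
    | succ N ih => rw [sum_range_succ, add_assoc, h, ih]
  have hlim := (tendsto_nat_tsum t).add ha
  rw [add_zero] at hlim
  exact tendsto_nhds_unique hlim (by simp only [partial_sum, tendsto_const_nhds])

end ENNReal

section Kac

variable {E : Type*} [Fintype E] {P : E → E → ℝ≥0∞} {S : Set E}

/-- `avoidBy P S n i = P(T_S > n | Y_0 = i)`. -/
noncomputable def avoidBy (P : E → E → ℝ≥0∞) (S : Set E) : ℕ → E → ℝ≥0∞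
  | 0, i => if i ∈ S then 0 else 1
  | n + 1, i => if i ∈ S then 0 else ∑ j, P i j * avoidBy P S n j

theorem avoidBy_of_mem {i : E} (hi : i ∈ S) (n : ℕ) : avoidBy P S n i = 0 := by
  cases n <;> simp [avoidBy, hi]

theorem avoidBy_zero_of_notMem {i : E} (hi : i ∉ S) : avoidBy P S 0 i = 1 := by
  simp [avoidBy, hi]

theorem avoidBy_succ_of_notMem {i : E} (hi : i ∉ S) (n : ℕ) :
    avoidBy P S (n + 1) i = ∑ j, P i j * avoidBy P S n j := by
  simp [avoidBy, hi]

theorem hitBy_add_avoidBy (hP : ∀ i, ∑ j, P i j = 1) (n : ℕ) (i : E) :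
    hitBy P S n i + avoidBy P S n i = 1 := by
  induction n generalizing i with
  | zero => by_cases hi : i ∈ S <;> simp [hitBy, avoidBy, hi]
  | succ n ih =>
    by_cases hi : i ∈ S
    · simp [hitBy, avoidBy, hi]
    · simp only [hitBy, avoidBy, hi, if_false, tsum_fintype, ← sum_add_distrib, ← mul_add, ih,
        mul_one, hP]

theorem avoidBy_le_one (hP : ∀ i, ∑ j, P i j = 1) (n : ℕ) (i : E) : avoidBy P S n i ≤ 1 :=
  hitBy_add_avoidBy hP n i ▸ le_add_self

theorem meanHit_eq_tsum_avoidBy (hP : ∀ i, ∑ j, P i j = 1) (i : E) :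
    meanHit P S i = ∑' n, avoidBy P S n i := by
  refine tsum_congr fun n => ?_
  rw [← hitBy_add_avoidBy (S := S) hP n i, ENNReal.add_sub_cancel_left]
  exact ne_top_of_le_ne_top ENNReal.one_ne_top (hitBy_add_avoidBy hP n i ▸ le_self_add)

theorem returnTime_eq (hP : ∀ i, ∑ j, P i j = 1) (i : E) :
    returnTime P S i = 1 + ∑' n, ∑ j, P i j * avoidBy P S n j := by
  simp only [returnTime, tsum_fintype, meanHit_eq_tsum_avoidBy hP, ← ENNReal.tsum_mul_left]
  rw [Summable.tsum_finsetSum fun _ _ => ENNReal.summable]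

theorem avoidBy_add_le (m n : ℕ) (i : E) :
    avoidBy P S (m + n) i ≤ avoidBy P S m i * univ.sup (avoidBy P S n) := by
  induction m generalizing i with
  | zero =>
    by_cases hi : i ∈ S
    · simp [avoidBy_of_mem hi]
    · simpa [avoidBy_zero_of_notMem hi] using le_sup (f := avoidBy P S n) (mem_univ i)
  | succ m ih =>
    by_cases hi : i ∈ S
    · simp [avoidBy_of_mem hi]
    · rw [Nat.add_right_comm, avoidBy_succ_of_notMem hi, avoidBy_succ_of_notMem hi, sum_mul]
      exact sum_le_sum fun j _ => by
        rw [mul_assoc]; exact mul_le_mul_right (ih j) _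

theorem avoidBy_antitone (hP : ∀ i, ∑ j, P i j = 1) (i : E) :
    Antitone fun n => avoidBy P S n i := by
  refine antitone_nat_of_succ_le fun n => ?_
  calc avoidBy P S (n + 1) i ≤ avoidBy P S n i * univ.sup (avoidBy P S 1) := avoidBy_add_le n 1 i
    _ ≤ avoidBy P S n i * 1 :=
      mul_le_mul_right (Finset.sup_le fun j _ => avoidBy_le_one hP 1 j) _
    _ = avoidBy P S n i := mul_one _

theorem exists_avoidBy_lt_one (hP : ∀ i, ∑ j, P i j = 1) {i j : E}
    (hij : Relation.ReflTransGen (fun a b => 0 < P a b) i j) (hj : j ∈ S) :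
    ∃ n, avoidBy P S n i < 1 := by
  induction hij using Relation.ReflTransGen.head_induction_on with
  | refl => exact ⟨0, by simp [avoidBy_of_mem hj]⟩
  | @head a c hac _ ih =>
    obtain ⟨n, hn⟩ := ih
    refine ⟨n + 1, ?_⟩
    by_cases ha : a ∈ S
    · simp [avoidBy_of_mem ha]
    have hac_top : P a c ≠ ⊤ := ne_top_of_le_ne_top ENNReal.one_ne_top
      (hP a ▸ single_le_sum (fun _ _ => zero_le) (mem_univ c))
    rw [avoidBy_succ_of_notMem ha, ← hP a]
    refine ENNReal.sum_lt_sum_of_le_of_lt (by simp [hP a])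
      (fun k _ => mul_le_of_le_one_right' (avoidBy_le_one hP n k)) (mem_univ c) ?_
    simpa using (ENNReal.mul_lt_mul_iff_right hac.ne' hac_top).2 hn

theorem tendsto_avoidBy_atTop_zero (hP : ∀ i, ∑ j, P i j = 1)
    (hS : ∀ i, ∃ j ∈ S, Relation.ReflTransGen (fun a b => 0 < P a b) i j) (i : E) :
    Tendsto (fun n => avoidBy P S n i) atTop (𝓝 0) := by
  choose n hn using fun k => (hS k).elim fun j hj => exists_avoidBy_lt_one hP hj.2 hj.1
  set N := univ.sup n
  set q := univ.sup (avoidBy P S N)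
  have hq : q < 1 := (Finset.sup_lt_iff zero_lt_one).2 fun k _ =>
    (avoidBy_antitone hP k (le_sup (mem_univ k))).trans_lt (hn k)
  have hpow : ∀ k, avoidBy P S (k * N) i ≤ q ^ k := by
    intro k
    induction k generalizing i with
    | zero => simpa using avoidBy_le_one hP 0 i
    | succ k ih =>
      calc avoidBy P S ((k + 1) * N) i ≤ avoidBy P S (k * N) i * q := by
            rw [Nat.succ_mul]; exact avoidBy_add_le _ _ i
        _ ≤ q ^ (k + 1) := by rw [pow_succ]; exact mul_le_mul_left (ih i) q
  have hinf : ⨅ n, avoidBy P S n i = 0 :=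
    le_antisymm (ge_of_tendsto' (ENNReal.tendsto_pow_atTop_nhds_zero_of_lt_one hq)
      fun k => iInf_le_of_le _ (hpow k)) zero_le
  exact hinf ▸ tendsto_atTop_iInf (avoidBy_antitone hP i)

theorem sum_mul_sum_mul_of_stationary {π : E → ℝ≥0∞} (hπ : ∀ j, ∑ i, π i * P i j = π j)
    (f : E → ℝ≥0∞) : ∑ i, π i * ∑ j, P i j * f j = ∑ j, π j * f j := by
  simp only [mul_sum, ← mul_assoc]
  rw [sum_comm]
  simp only [← sum_mul, hπ]

/-- Kac's formula. -/
theorem sum_mul_returnTime_eq_one (hP : ∀ i, ∑ j, P i j = 1) {π : E → ℝ≥0∞}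
    (hπ_sum : ∑ i, π i = 1) (hπ : ∀ j, ∑ i, π i * P i j = π j)
    (hS : ∀ i, ∃ j ∈ S, Relation.ReflTransGen (fun a b => 0 < P a b) i j)
    [DecidablePred (· ∈ S)] :
    ∑ i ∈ univ.filter (· ∈ S), π i * returnTime P S i = 1 := by
  set a : ℕ → ℝ≥0∞ := fun n => ∑ j, π j * avoidBy P S n j
  set t : ℕ → ℝ≥0∞ := fun n => ∑ i ∈ univ.filter (· ∈ S), π i * ∑ j, P i j * avoidBy P S n j
  have hstep : ∀ n, t n + a (n + 1) = a n := by
    intro n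
    have hout : a (n + 1) = ∑ i ∈ univ.filter (· ∉ S), π i * ∑ j, P i j * avoidBy P S n j := by
      rw [sum_filter]
      refine sum_congr rfl fun i _ => ?_
      by_cases hi : i ∈ S
      · simp [hi, avoidBy_of_mem hi]
      · simp [hi, avoidBy_succ_of_notMem hi]
    rw [hout, sum_filter_add_sum_filter_not, sum_mul_sum_mul_of_stationary hπ]
  have ha : Tendsto a atTop (𝓝 0) := by
    have hπ_top : ∀ j, π j ≠ ⊤ := fun j => ne_top_of_le_ne_top ENNReal.one_ne_top
      (hπ_sum ▸ single_le_sum (fun _ _ => zero_le) (mem_univ j))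
    simpa using tendsto_finsetSum univ fun j _ =>
      ENNReal.Tendsto.const_mul (tendsto_avoidBy_atTop_zero hP hS j) (Or.inr (hπ_top j))
  have ha0 : a 0 = ∑ i ∈ univ.filter (· ∉ S), π i := by
    rw [sum_filter]
    refine sum_congr rfl fun i _ => ?_
    by_cases hi : i ∈ S
    · simp [hi, avoidBy_of_mem hi]
    · simp [hi, avoidBy_zero_of_notMem hi]
  calc ∑ i ∈ univ.filter (· ∈ S), π i * returnTime P S i
      = ∑ i ∈ univ.filter (· ∈ S), π i + ∑' n, t n := by
        simp only [returnTime_eq hP, mul_add, mul_one, sum_add_distrib, ← ENNReal.tsum_mul_left]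
        rw [Summable.tsum_finsetSum fun _ _ => ENNReal.summable]
    _ = 1 := by
        rw [ENNReal.tsum_eq_of_add_succ_eq hstep ha, ha0, sum_filter_add_sum_filter_not, hπ_sum]

end Kac

namespace SimpleGraph

variable {V : Type*} [Fintype V] (G : SimpleGraph V) [DecidableRel G.Adj]

abbrev DirEdge := {e : V × V // G.Adj e.1 e.2}

theorem card_dirEdge : Fintype.card G.DirEdge = ∑ v, G.degree v := by
  rw [← dart_card_eq_sum_degrees]
  exact Fintype.card_congr
    ⟨fun e => ⟨e.1, e.2⟩, fun d => ⟨d.toProd, d.adj⟩, fun _ => rfl, fun _ => rfl⟩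

theorem natCast_degree_ne_zero_of_adj {u v : V} (h : G.Adj u v) : (G.degree v : ℝ≥0∞) ≠ 0 := by
  simpa [← Nat.pos_iff_ne_zero] using (G.degree_pos_iff_exists_adj v).2 ⟨u, G.adj_symm h⟩

variable [DecidableEq V]

theorem card_filter_fst_eq_and (v : V) (p : V → Prop) [DecidablePred p] :
    #{f : G.DirEdge | f.1.1 = v ∧ p f.1.2} = #{u ∈ G.neighborFinset v | p u} := by
  refine card_bij' (fun f _ => f.1.2)
    (fun u hu => ⟨(v, u), (G.mem_neighborFinset v u).1 (mem_filter.1 hu).1⟩) ?_ ?_ ?_ ?_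
  · rintro ⟨⟨a, b⟩, hab⟩ hf
    obtain ⟨rfl, hp⟩ := (mem_filter.1 hf).2
    simpa [hab] using hp
  · intro u hu
    simpa using (mem_filter.1 hu).2
  · rintro ⟨⟨a, b⟩, hab⟩ hf
    obtain ⟨rfl, -⟩ := (mem_filter.1 hf).2
    rfl
  · intro u _
    rfl

theorem card_filter_snd_eq_and (v : V) (p : V → Prop) [DecidablePred p] :
    #{e : G.DirEdge | e.1.2 = v ∧ p e.1.1} = #{u ∈ G.neighborFinset v | p u} := by
  rw [← card_filter_fst_eq_and]
  let reverse : G.DirEdge ≃ G.DirEdge :=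
    ⟨fun e => ⟨e.1.swap, G.adj_symm e.2⟩, fun e => ⟨e.1.swap, G.adj_symm e.2⟩,
      fun _ => rfl, fun _ => rfl⟩
  exact card_equiv reverse fun e => by simp [reverse]

theorem card_filter_snd_eq (v : V) : #{e : G.DirEdge | e.1.2 = v} = G.degree v := by
  simpa using G.card_filter_snd_eq_and v (fun _ => True)

noncomputable def lineGraphWalk : Matrix G.DirEdge G.DirEdge ℝ≥0∞ := fun e f =>
  if e.1.2 = f.1.1 then (G.degree f.1.1 : ℝ≥0∞)⁻¹ else 0

noncomputable def nonBacktrackingWalk : Matrix G.DirEdge G.DirEdge ℝ≥0∞ := fun e f =>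
  if e.1.2 = f.1.1 ∧ f.1.2 ≠ e.1.1 then ((G.degree e.1.2 : ℝ≥0∞) - 1)⁻¹ else 0

theorem lineGraphWalk_mem_doublyStochastic :
    G.lineGraphWalk ∈ doublyStochastic ℝ≥0∞ G.DirEdge := by
  refine mem_doublyStochastic_iff_sum.2 ⟨fun _ _ => zero_le, fun e => ?_, fun f => ?_⟩
  · have hcard : #{f : G.DirEdge | e.1.2 = f.1.1} = G.degree e.1.2 := by
      simpa [eq_comm] using G.card_filter_fst_eq_and e.1.2 (fun _ => True)
    have hterm : ∀ f, G.lineGraphWalk e f =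
        if e.1.2 = f.1.1 then (G.degree e.1.2 : ℝ≥0∞)⁻¹ else 0 := fun f => by
      unfold lineGraphWalk
      split_ifs with h
      exacts [by rw [h], rfl]
    simp only [hterm]
    rw [← sum_filter, sum_const, hcard, nsmul_eq_mul]
    exact ENNReal.mul_inv_cancel (G.natCast_degree_ne_zero_of_adj e.2)
      (ENNReal.natCast_ne_top _)
  · have hcard : #{e : G.DirEdge | e.1.2 = f.1.1} = G.degree f.1.1 := by
      simpa using G.card_filter_snd_eq_and f.1.1 (fun _ => True)
    simp only [lineGraphWalk]
    rw [← sum_filter, sum_const, hcard, nsmul_eq_mul]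
    exact ENNReal.mul_inv_cancel (G.natCast_degree_ne_zero_of_adj (G.adj_symm f.2))
      (ENNReal.natCast_ne_top _)

theorem nonBacktrackingWalk_mem_doublyStochastic (hdeg : ∀ u v, G.Adj u v → 2 ≤ G.degree v) :
    G.nonBacktrackingWalk ∈ doublyStochastic ℝ≥0∞ G.DirEdge := by
  refine mem_doublyStochastic_iff_sum.2 ⟨fun _ _ => zero_le, fun e => ?_, fun f => ?_⟩
  · have hcard : #{f : G.DirEdge | e.1.2 = f.1.1 ∧ f.1.2 ≠ e.1.1} = G.degree e.1.2 - 1 := by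
      simpa [eq_comm, filter_ne', G.adj_symm e.2] using
        G.card_filter_fst_eq_and e.1.2 (· ≠ e.1.1)
    simp only [nonBacktrackingWalk]
    rw [← sum_filter, sum_const, hcard, nsmul_eq_mul]
    exact ENNReal.natCast_sub_one_mul_inv (hdeg _ _ e.2)
  · have hcard : #{e : G.DirEdge | e.1.2 = f.1.1 ∧ f.1.2 ≠ e.1.1} = G.degree f.1.1 - 1 := by
      simpa [ne_comm, filter_ne', f.2] using G.card_filter_snd_eq_and f.1.1 (· ≠ f.1.2)
    have hterm : ∀ e, G.nonBacktrackingWalk e f =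
        if e.1.2 = f.1.1 ∧ f.1.2 ≠ e.1.1 then ((G.degree f.1.1 : ℝ≥0∞) - 1)⁻¹ else 0 :=
      fun e => by
      unfold nonBacktrackingWalk
      split_ifs with h
      exacts [by rw [h.1], rfl]
    simp only [hterm]
    rw [← sum_filter, sum_const, hcard, nsmul_eq_mul]
    exact ENNReal.natCast_sub_one_mul_inv (hdeg _ _ (G.adj_symm f.2))

theorem backtrackDownweightedWalk_mem_doublyStochastic
    (hdeg : ∀ u v, G.Adj u v → 2 ≤ G.degree v) {α : ℝ≥0∞} (hα : α ≤ 1) :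
    α • G.lineGraphWalk + (1 - α) • G.nonBacktrackingWalk ∈ doublyStochastic ℝ≥0∞ G.DirEdge :=
  convex_doublyStochastic G.lineGraphWalk_mem_doublyStochastic
    (G.nonBacktrackingWalk_mem_doublyStochastic hdeg) zero_le zero_le (add_tsub_cancel_of_le hα)

end SimpleGraph

theorem backtrackDownweighted_return_times_general {V : Type*} [Fintype V] [DecidableEq V]
    (G : SimpleGraph V) [DecidableRel G.Adj]
    (hdeg : ∀ v, 2 ≤ G.degree v)
    (α : ℝ≥0∞) (hα : α ≤ 1)
    -- the uniform line-graph walk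
    (Phat1 : {e : V × V // G.Adj e.1 e.2} → {e : V × V // G.Adj e.1 e.2} → ℝ≥0∞)
    (hPhat1 : ∀ e f, Phat1 e f =
      if e.val.2 = f.val.1 then ((G.degree f.val.1 : ℝ≥0∞))⁻¹ else 0)
    -- the non-backtracking walk
    (Phat0 : {e : V × V // G.Adj e.1 e.2} → {e : V × V // G.Adj e.1 e.2} → ℝ≥0∞)
    (hPhat0 : ∀ e f, Phat0 e f =
      if e.val.2 = f.val.1 ∧ f.val.2 ≠ e.val.1 then
        ((G.degree e.val.2 : ℝ≥0∞) - (if G.Adj e.val.2 e.val.1 then 1 else 0))⁻¹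
      else 0)
    (Phata : {e : V × V // G.Adj e.1 e.2} → {e : V × V // G.Adj e.1 e.2} → ℝ≥0∞)
    (hPhata : ∀ e f, Phata e f = α * Phat1 e f + (1 - α) * Phat0 e f)
    -- ergodicity of the edge chain
    (hirr : ∀ e f, Relation.ReflTransGen (fun a b => 0 < Phata a b) e f)
    -- the (uniform) stationary distribution of the bi-stochastic matrix `P̂^(α)`
    (πhat : {e : V × V // G.Adj e.1 e.2} → ℝ≥0∞)
    (hπhat : ∀ e, πhat e = (∑ j, (G.degree j : ℝ≥0∞))⁻¹)
    -- the second-order mean return time to node `i` at equilibrium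
    (τ : V → ℝ≥0∞)
    (hτ : ∀ i, τ i =
      (∑ e ∈ Finset.univ.filter (fun e : {e : V × V // G.Adj e.1 e.2} => e.val.2 = i),
          πhat e * returnTime Phata {f | f.val.2 = i} e) /
        (∑ e ∈ Finset.univ.filter (fun e : {e : V × V // G.Adj e.1 e.2} => e.val.2 = i),
          πhat e)) :
    ∀ i, τ i = (∑ j, (G.degree j : ℝ≥0∞)) / (G.degree i : ℝ≥0∞) := by
  intro i
  obtain ⟨u, hu⟩ := (G.degree_pos_iff_exists_adj i).1 (by linarith [hdeg i])
  have hdi : (G.degree i : ℝ≥0∞) ≠ 0 := G.natCast_degree_ne_zero_of_adj (G.adj_symm hu)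
  have hPa : Phata ∈ doublyStochastic ℝ≥0∞ G.DirEdge := by
    have hPa_eq : Phata = α • G.lineGraphWalk + (1 - α) • G.nonBacktrackingWalk :=
      funext₂ fun e f => by rw [hPhata, hPhat1, hPhat0, if_pos (G.adj_symm e.2)]; rfl
    exact hPa_eq ▸ G.backtrackDownweightedWalk_mem_doublyStochastic (fun _ v _ => hdeg v) hα
  set D := ∑ j, (G.degree j : ℝ≥0∞)
  have hπ_sum : ∑ e, πhat e = 1 := by
    have hD : (Fintype.card G.DirEdge : ℝ≥0∞) = D := by simp [D, G.card_dirEdge]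
    rw [sum_congr rfl fun e _ => hπhat e, sum_const, card_univ, nsmul_eq_mul, hD]
    exact ENNReal.mul_inv_cancel (fun h => hdi (sum_eq_zero_iff.1 h i (mem_univ i))) (by simp [D])
  have hπ_stat : ∀ f, ∑ e, πhat e * Phata e f = πhat f := fun f => by
    simp only [hπhat, ← mul_sum, sum_col_of_mem_doublyStochastic hPa, mul_one]
  have hkac : ∑ e ∈ univ.filter (fun e : G.DirEdge => e.1.2 = i),
      πhat e * returnTime Phata {f | f.1.2 = i} e = 1 :=
    sum_mul_returnTime_eq_one (S := {f : G.DirEdge | f.1.2 = i})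
      (sum_row_of_mem_doublyStochastic hPa) hπ_sum hπ_stat
      fun e => ⟨⟨(u, i), G.adj_symm hu⟩, rfl, hirr e _⟩
  have hmass :
      ∑ e ∈ univ.filter (fun e : G.DirEdge => e.1.2 = i), πhat e = G.degree i * D⁻¹ := by
    rw [sum_congr rfl fun e _ => hπhat e, sum_const, G.card_filter_snd_eq, nsmul_eq_mul]
  rw [hτ, hkac, hmass, one_div, ENNReal.mul_inv (Or.inl hdi) (Or.inl (ENNReal.natCast_ne_top _)),
    inv_inv, ENNReal.div_eq_inv_mul]

/-- For the backtrack-downweighted edge chain `P̂^(α) = α P̂^(1) + (1−α) P̂^(0)` on a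
finite undirected connected graph without dangling edges, whenever the edge chain is
ergodic, the second-order mean return time at equilibrium is
`τ̃_i = (∑_j d_j)/d_i`, independently of `α`. -/
theorem backtrackDownweighted_return_times {V : Type*} [Fintype V] [DecidableEq V]
    (G : SimpleGraph V) [DecidableRel G.Adj] (hconn : G.Connected)
    (hdeg : ∀ v, 2 ≤ G.degree v)
    (hnd : ∀ i j : V, G.Adj i j → ∃ k, G.Adj j k ∧ k ≠ i)
    (α : ℝ≥0∞) (hα : α ≤ 1)
    -- the uniform line-graph walk
    (Phat1 : {e : V × V // G.Adj e.1 e.2} → {e : V × V // G.Adj e.1 e.2} → ℝ≥0∞)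
    (hPhat1 : ∀ e f, Phat1 e f =
      if e.val.2 = f.val.1 then ((G.degree f.val.1 : ℝ≥0∞))⁻¹ else 0)
    -- the non-backtracking walk
    (Phat0 : {e : V × V // G.Adj e.1 e.2} → {e : V × V // G.Adj e.1 e.2} → ℝ≥0∞)
    (hPhat0 : ∀ e f, Phat0 e f =
      if e.val.2 = f.val.1 ∧ f.val.2 ≠ e.val.1 then
        ((G.degree e.val.2 : ℝ≥0∞) - (if G.Adj e.val.2 e.val.1 then 1 else 0))⁻¹
      else 0)
    (Phata : {e : V × V // G.Adj e.1 e.2} → {e : V × V // G.Adj e.1 e.2} → ℝ≥0∞)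
    (hPhata : ∀ e f, Phata e f = α * Phat1 e f + (1 - α) * Phat0 e f)
    -- ergodicity of the edge chain
    (hirr : ∀ e f, Relation.ReflTransGen (fun a b => 0 < Phata a b) e f)
    -- the (uniform) stationary distribution of the bi-stochastic matrix `P̂^(α)`
    (πhat : {e : V × V // G.Adj e.1 e.2} → ℝ≥0∞)
    (hπhat : ∀ e, πhat e = (∑ j, (G.degree j : ℝ≥0∞))⁻¹)
    -- the second-order mean return time to node `i` at equilibrium
    (τ : V → ℝ≥0∞)
    (hτ : ∀ i, τ i =
      (∑ e ∈ Finset.univ.filter (fun e : {e : V × V // G.Adj e.1 e.2} => e.val.2 = i),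
          πhat e * returnTime Phata {f | f.val.2 = i} e) /
        (∑ e ∈ Finset.univ.filter (fun e : {e : V × V // G.Adj e.1 e.2} => e.val.2 = i),
          πhat e)) :
    ∀ i, τ i = (∑ j, (G.degree j : ℝ≥0∞)) / (G.degree i : ℝ≥0∞) :=
  backtrackDownweighted_return_times_general G hdeg α hα Phat1 hPhat1 Phat0 hPhat0 Phata hPhata hirr
    πhat hπhat τ hτ
end
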